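/- Let U be a nonempty open subset of ℂ, let γ : U → Mat(n, ℂ) be a smooth function with γ(c) invertible for every c ∈ U, let c_− : U → Mat(n, ℂ) be holomorphic (∂_+ c_− = 0) and c_+ : U → Mat(n, ℂ) be antiholomorphic (∂_− c_+ = 0). Define ω_− = γ^{-1} ∂_− γ + c_− and ω_+ = γ^{-1} c_+ γ. Then the zero-curvature condition ∂_− ω_+ − ∂_+ ω_− + [ω_−, ω_+] = 0 holds on U if and only if γ satisfies the Toda equation ∂_+(γ^{-1} ∂_− γ) = [c_−, γ^{-1} c_+ γ] on U, where [A, B] = AB − BA. -/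

import Mathlib

open Matrix

/-- The Wirtinger derivative `∂₋ F = ∂F/∂z = ½(∂ₓ - i ∂_y)F` of a matrix-valued
function on `ℂ`, taken entrywise. -/
noncomputable def wdMinus {N : ℕ} (F : ℂ → Matrix (Fin N) (Fin N) ℂ) (c : ℂ) :
    Matrix (Fin N) (Fin N) ℂ :=
  Matrix.of fun i j =>
    (1 / 2 : ℂ) *
      (fderiv ℝ (fun z => F z i j) c 1 - Complex.I * fderiv ℝ (fun z => F z i j) c Complex.I)

/-- The Wirtinger derivative `∂₊ F = ∂F/∂z̄ = ½(∂ₓ + i ∂_y)F` of a matrix-valued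
function on `ℂ`, taken entrywise. -/
noncomputable def wdPlus {N : ℕ} (F : ℂ → Matrix (Fin N) (Fin N) ℂ) (c : ℂ) :
    Matrix (Fin N) (Fin N) ℂ :=
  Matrix.of fun i j =>
    (1 / 2 : ℂ) *
      (fderiv ℝ (fun z => F z i j) c 1 + Complex.I * fderiv ℝ (fun z => F z i j) c Complex.I)

namespace ZCaux

variable {N : ℕ}

/-- entrywise directional derivative -/
noncomputable def md (v : ℂ) (F : ℂ → Matrix (Fin N) (Fin N) ℂ) (c : ℂ) :
    Matrix (Fin N) (Fin N) ℂ :=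
  Matrix.of fun i j => fderiv ℝ (fun z => F z i j) c v

/-- entrywise differentiability -/
def DE (F : ℂ → Matrix (Fin N) (Fin N) ℂ) (c : ℂ) : Prop :=
  ∀ i j, DifferentiableAt ℝ (fun z => F z i j) c

lemma wdMinus_eq (F : ℂ → Matrix (Fin N) (Fin N) ℂ) (c : ℂ) :
    wdMinus F c = (1/2 : ℂ) • md 1 F c - ((1/2 : ℂ) * Complex.I) • md Complex.I F c := by
  ext i j
  simp only [wdMinus, md, Matrix.sub_apply, Matrix.smul_apply, Matrix.of_apply, smul_eq_mul]
  ring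

lemma wdPlus_eq (F : ℂ → Matrix (Fin N) (Fin N) ℂ) (c : ℂ) :
    wdPlus F c = (1/2 : ℂ) • md 1 F c + ((1/2 : ℂ) * Complex.I) • md Complex.I F c := by
  ext i j
  simp only [wdPlus, md, Matrix.add_apply, Matrix.smul_apply, Matrix.of_apply, smul_eq_mul]
  ring

lemma DE.mul {f g : ℂ → Matrix (Fin N) (Fin N) ℂ} {c : ℂ} (hf : DE f c) (hg : DE g c) :
    DE (fun z => f z * g z) c := by
  intro i j
  have : (fun z => (f z * g z) i j) = fun z => ∑ k, f z i k * g z k j := by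
    funext z; simp [Matrix.mul_apply]
  rw [this]
  exact DifferentiableAt.fun_sum fun k _ => (hf i k).mul (hg k j)

lemma md_mul {f g : ℂ → Matrix (Fin N) (Fin N) ℂ} {c : ℂ} (v : ℂ)
    (hf : DE f c) (hg : DE g c) :
    md v (fun z => f z * g z) c = md v f c * g c + f c * md v g c := by
  ext i j
  have h1 : (fun z => (f z * g z) i j) = fun z => ∑ k, f z i k * g z k j := by
    funext z; simp [Matrix.mul_apply]
  simp only [md, Matrix.of_apply, Matrix.add_apply, Matrix.mul_apply, h1]
  rw [fderiv_fun_sum (fun k _ => (hf i k).fun_mul (hg k j)), ContinuousLinearMap.sum_apply,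
    ← Finset.sum_add_distrib]
  refine Finset.sum_congr rfl fun k _ => ?_
  rw [fderiv_fun_mul (hf i k) (hg k j)]
  simp only [ContinuousLinearMap.add_apply, ContinuousLinearMap.smul_apply, smul_eq_mul]
  ring

lemma md_add {f g : ℂ → Matrix (Fin N) (Fin N) ℂ} {c : ℂ} (v : ℂ)
    (hf : DE f c) (hg : DE g c) :
    md v (fun z => f z + g z) c = md v f c + md v g c := by
  ext i j
  simp only [md, Matrix.of_apply, Matrix.add_apply]
  rw [fderiv_fun_add (hf i j) (hg i j)]
  simp

lemma md_eventually_one {F : ℂ → Matrix (Fin N) (Fin N) ℂ} {c : ℂ} (v : ℂ)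
    (h : ∀ᶠ z in nhds c, F z = 1) : md v F c = 0 := by
  ext i j
  have he : (fun z => F z i j) =ᶠ[nhds c] fun _ => (1 : Matrix (Fin N) (Fin N) ℂ) i j :=
    h.mono fun z hz => by simp [hz]
  have : fderiv ℝ (fun z => F z i j) c = fderiv ℝ (fun _ => (1 : Matrix (Fin N) (Fin N) ℂ) i j) c :=
    he.fderiv_eq
  simp [md, this]

lemma wdMinus_mul {f g : ℂ → Matrix (Fin N) (Fin N) ℂ} {c : ℂ} (hf : DE f c) (hg : DE g c) :
    wdMinus (fun z => f z * g z) c = wdMinus f c * g c + f c * wdMinus g c := by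
  rw [wdMinus_eq, wdMinus_eq, wdMinus_eq, md_mul _ hf hg, md_mul _ hf hg]
  simp only [smul_add, Matrix.sub_mul, Matrix.mul_sub, smul_mul_assoc, mul_smul_comm]
  abel

lemma wdPlus_mul {f g : ℂ → Matrix (Fin N) (Fin N) ℂ} {c : ℂ} (hf : DE f c) (hg : DE g c) :
    wdPlus (fun z => f z * g z) c = wdPlus f c * g c + f c * wdPlus g c := by
  rw [wdPlus_eq, wdPlus_eq, wdPlus_eq, md_mul _ hf hg, md_mul _ hf hg]
  simp only [smul_add, Matrix.add_mul, Matrix.mul_add, smul_mul_assoc, mul_smul_comm]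
  abel

lemma wdPlus_add {f g : ℂ → Matrix (Fin N) (Fin N) ℂ} {c : ℂ} (hf : DE f c) (hg : DE g c) :
    wdPlus (fun z => f z + g z) c = wdPlus f c + wdPlus g c := by
  rw [wdPlus_eq, wdPlus_eq, wdPlus_eq, md_add _ hf hg, md_add _ hf hg]
  simp only [smul_add]
  abel

lemma wdMinus_eventually_one {F : ℂ → Matrix (Fin N) (Fin N) ℂ} {c : ℂ}
    (h : ∀ᶠ z in nhds c, F z = 1) : wdMinus F c = 0 := by
  rw [wdMinus_eq, md_eventually_one _ h, md_eventually_one _ h]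
  simp

lemma diffAt_det {M : ℂ → Matrix (Fin N) (Fin N) ℂ} {c : ℂ}
    (h : ∀ i j, DifferentiableAt ℝ (fun z => M z i j) c) :
    DifferentiableAt ℝ (fun z => (M z).det) c := by
  have : (fun z => (M z).det)
      = fun z => ∑ σ : Equiv.Perm (Fin N), (↑↑(Equiv.Perm.sign σ) : ℂ) * ∏ i, M z (σ i) i := by
    funext z; rw [Matrix.det_apply']
  rw [this]
  refine DifferentiableAt.fun_sum fun σ _ => DifferentiableAt.const_mul ?_ _
  exact (HasFDerivAt.finset_prod fun i _ => (h (σ i) i).hasFDerivAt).differentiableAt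

lemma diffAt_inv {γ : ℂ → Matrix (Fin N) (Fin N) ℂ} {c : ℂ}
    (h : ∀ i j, DifferentiableAt ℝ (fun z => γ z i j) c)
    (hdet : (γ c).det ≠ 0) :
    DE (fun z => (γ z)⁻¹) c := by
  intro i j
  have hadj : DifferentiableAt ℝ (fun z => (γ z).adjugate i j) c := by
    simp only [Matrix.adjugate_apply]
    apply diffAt_det
    intro k l
    simp only [Matrix.updateRow_apply]
    by_cases hk : k = j
    · simp only [hk, if_true]
      exact differentiableAt_const _
    · simp only [hk, if_false]
      exact h k l
  have hdetdiff : DifferentiableAt ℝ (fun z => (γ z).det) c := diffAt_det h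
  have hinv : DifferentiableAt ℝ (fun z => ((γ z).det)⁻¹) c := by
    have h1 : DifferentiableAt ℂ Inv.inv ((γ c).det) := differentiableAt_inv hdet
    exact (h1.restrictScalars ℝ).comp c hdetdiff
  have heq : (fun z => (γ z)⁻¹ i j) = fun z => ((γ z).det)⁻¹ * (γ z).adjugate i j := by
    funext z
    rw [Matrix.inv_def, Ring.inverse_eq_inv']
    simp [Matrix.smul_apply, smul_eq_mul]
  rw [heq]
  exact hinv.mul hadj

end ZCaux

/-- for `ω₋ = γ⁻¹ ∂₋γ + c₋` and `ω₊ = γ⁻¹ c₊ γ`, with `γ` smooth and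
pointwise invertible on the nonempty open `U`, `c₋` holomorphic and `c₊`
antiholomorphic, the zero-curvature condition `∂₋ω₊ - ∂₊ω₋ + [ω₋, ω₊] = 0` on `U`
is equivalent to the Toda equation `∂₊(γ⁻¹ ∂₋γ) = [c₋, γ⁻¹ c₊ γ]` on `U`. -/


theorem zero_curvature_iff_toda {n : ℕ}
    (U : Set ℂ) (hU : IsOpen U) (hne : U.Nonempty)
    (γ cm cp : ℂ → Matrix (Fin n) (Fin n) ℂ)
    (hγs : ∀ i j, ContDiffOn ℝ (⊤ : ℕ∞) (fun z => γ z i j) U)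
    (hγinv : ∀ c ∈ U, IsUnit (γ c))
    (hcms : ∀ i j, ContDiffOn ℝ (⊤ : ℕ∞) (fun z => cm z i j) U)
    (hcmhol : ∀ c ∈ U, wdPlus cm c = 0)
    (hcps : ∀ i j, ContDiffOn ℝ (⊤ : ℕ∞) (fun z => cp z i j) U)
    (hcpahol : ∀ c ∈ U, wdMinus cp c = 0) :
    (∀ c ∈ U,
        wdMinus (fun z => (γ z)⁻¹ * cp z * γ z) c
            - wdPlus (fun z => (γ z)⁻¹ * wdMinus γ z + cm z) c
            + (((γ c)⁻¹ * wdMinus γ c + cm c) * ((γ c)⁻¹ * cp c * γ c)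
              - ((γ c)⁻¹ * cp c * γ c) * ((γ c)⁻¹ * wdMinus γ c + cm c)) = 0) ↔
      (∀ c ∈ U,
        wdPlus (fun z => (γ z)⁻¹ * wdMinus γ z) c
          = cm c * ((γ c)⁻¹ * cp c * γ c) - ((γ c)⁻¹ * cp c * γ c) * cm c) := by
  classical
  open ZCaux in
  -- entrywise differentiability facts
  have hdγ : ∀ c ∈ U, DE γ c := fun c hc i j =>
    ((hγs i j).differentiableOn (by simp)).differentiableAt (hU.mem_nhds hc)
  have hdcm : ∀ c ∈ U, DE cm c := fun c hc i j =>
    ((hcms i j).differentiableOn (by simp)).differentiableAt (hU.mem_nhds hc)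
  have hdcp : ∀ c ∈ U, DE cp c := fun c hc i j =>
    ((hcps i j).differentiableOn (by simp)).differentiableAt (hU.mem_nhds hc)
  have hdetU : ∀ c ∈ U, IsUnit (γ c).det := fun c hc =>
    (Matrix.isUnit_iff_isUnit_det _).mp (hγinv c hc)
  have hdinv : ∀ c ∈ U, DE (fun z => (γ z)⁻¹) c := fun c hc =>
    diffAt_inv (hdγ c hc) (hdetU c hc).ne_zero
  -- differentiability of wdMinus γ
  have hfd : ∀ (i j : Fin n) (v : ℂ),
      ContDiffOn ℝ (⊤ : ℕ∞) (fun z => fderiv ℝ (fun w => γ w i j) z v) U := by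
    intro i j v
    have h1 : ContDiffOn ℝ (⊤ : ℕ∞) (fderiv ℝ (fun w => γ w i j)) U :=
      (hγs i j).fderiv_of_isOpen hU (by simp)
    exact h1.clm_apply contDiffOn_const
  have hdw : ∀ c ∈ U, DE (fun z => wdMinus γ z) c := by
    intro c hc i j
    have h1 := ((hfd i j 1).differentiableOn (by simp)).differentiableAt (hU.mem_nhds hc)
    have h2 := ((hfd i j Complex.I).differentiableOn (by simp)).differentiableAt (hU.mem_nhds hc)
    have he : (fun z => wdMinus γ z i j) = fun z => (1/2 : ℂ) *
        (fderiv ℝ (fun w => γ w i j) z 1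
          - Complex.I * fderiv ℝ (fun w => γ w i j) z Complex.I) := by
      funext z; simp [wdMinus]
    rw [he]
    exact (h1.sub (h2.const_mul Complex.I)).const_mul _
  -- wirtinger derivative of γ⁻¹
  have hwdinv : ∀ c ∈ U,
      wdMinus (fun z => (γ z)⁻¹) c = -((γ c)⁻¹ * wdMinus γ c * (γ c)⁻¹) := by
    intro c hc
    have hev : ∀ᶠ z in nhds c, γ z * (γ z)⁻¹ = 1 :=
      (hU.eventually_mem hc).mono fun z hz => Matrix.mul_nonsing_inv _ (hdetU z hz)
    have h0 : wdMinus (fun z => γ z * (γ z)⁻¹) c = 0 := wdMinus_eventually_one hev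
    rw [wdMinus_mul (hdγ c hc) (hdinv c hc)] at h0
    have h1 : γ c * wdMinus (fun z => (γ z)⁻¹) c = -(wdMinus γ c * (γ c)⁻¹) :=
      eq_neg_of_add_eq_zero_right h0
    have h2 : (γ c)⁻¹ * γ c = 1 := Matrix.nonsing_inv_mul _ (hdetU c hc)
    calc wdMinus (fun z => (γ z)⁻¹) c
        = (γ c)⁻¹ * (γ c * wdMinus (fun z => (γ z)⁻¹) c) := by
          rw [← Matrix.mul_assoc, h2, Matrix.one_mul]
      _ = -((γ c)⁻¹ * wdMinus γ c * (γ c)⁻¹) := by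
          rw [h1, Matrix.mul_neg, Matrix.mul_assoc]
  -- the key pointwise identity
  have key : ∀ c ∈ U,
      wdMinus (fun z => (γ z)⁻¹ * cp z * γ z) c
          - wdPlus (fun z => (γ z)⁻¹ * wdMinus γ z + cm z) c
          + (((γ c)⁻¹ * wdMinus γ c + cm c) * ((γ c)⁻¹ * cp c * γ c)
            - ((γ c)⁻¹ * cp c * γ c) * ((γ c)⁻¹ * wdMinus γ c + cm c))
        = (cm c * ((γ c)⁻¹ * cp c * γ c) - ((γ c)⁻¹ * cp c * γ c) * cm c)
          - wdPlus (fun z => (γ z)⁻¹ * wdMinus γ z) c := by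
    intro c hc
    have hA : DE (fun z => (γ z)⁻¹ * wdMinus γ z) c := (hdinv c hc).mul (hdw c hc)
    have hic : DE (fun z => (γ z)⁻¹ * cp z) c := (hdinv c hc).mul (hdcp c hc)
    rw [wdPlus_add hA (hdcm c hc), hcmhol c hc, add_zero]
    rw [wdMinus_mul hic (hdγ c hc), wdMinus_mul (hdinv c hc) (hdcp c hc),
      hwdinv c hc, hcpahol c hc, Matrix.mul_zero, add_zero]
    have h : γ c * (γ c)⁻¹ = 1 := Matrix.mul_nonsing_inv _ (hdetU c hc)
    have h2 : ∀ X : Matrix (Fin n) (Fin n) ℂ, γ c * ((γ c)⁻¹ * X) = X := fun X => by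
      rw [← Matrix.mul_assoc, h, Matrix.one_mul]
    simp only [Matrix.add_mul, Matrix.mul_add, Matrix.neg_mul, Matrix.mul_assoc, h2]
    abel
  constructor
  · intro h c hc
    have h0 := h c hc
    rw [key c hc] at h0
    exact (sub_eq_zero.mp h0).symm
  · intro h c hc
    rw [key c hc]
    exact sub_eq_zero.mpr (h c hc).symm
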